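/- If μ₁ and μ₂ are exact-dimensional finite Borel measures on ℝ of dimensions d₁ and d₂ respectively, then the product measure μ₁ × μ₂ on ℝ² is exact-dimensional of dimension d₁ + d₂. -/
import Mathlib

open MeasureTheory Metric Filter Set

/-- `μ` on a metric space is exact-dimensional of dimension `s`. -/
def ExactDimensional {X : Type*} [MetricSpace X] [MeasurableSpace X]
    (μ : Measure X) (s : ℝ) : Prop :=
  ∀ᵐ x ∂μ, Tendsto (fun ε : ℝ => Real.log (μ (ball x ε)).toReal / Real.log ε)
    (nhdsWithin 0 (Ioi 0)) (nhds s)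

/-- Almost every point has positive measure balls around it. -/
lemma ae_ball_pos (μ : Measure ℝ) :
    ∀ᵐ x ∂μ, ∀ ε : ℝ, 0 < ε → μ (ball x ε) ≠ 0 := by
  set U : Set ℝ := ⋃ (p : ℚ × ℚ) (_ : μ (ball (p.1 : ℝ) (p.2 : ℝ)) = 0),
      ball (p.1 : ℝ) (p.2 : ℝ) with hU
  have hUnull : μ U = 0 :=
    measure_iUnion_null fun p => measure_iUnion_null fun hp => hp
  refine measure_mono_null ?_ hUnull
  intro x hx
  simp only [mem_compl_iff, mem_setOf_eq, not_forall] at hx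
  obtain ⟨ε, hε, h0⟩ := hx
  push_neg at h0
  obtain ⟨q, hq1, hq2⟩ := exists_rat_btwn (show x - ε/4 < x by linarith)
  obtain ⟨r, hr1, hr2⟩ := exists_rat_btwn (show (ε:ℝ)/4 < ε/2 by linarith)
  have hxq : |x - (q:ℝ)| < ε/4 := by rw [abs_sub_lt_iff]; constructor <;> linarith
  have hmem : x ∈ ball (q:ℝ) (r:ℝ) := by
    rw [mem_ball, Real.dist_eq]; linarith [abs_sub_lt_iff.1 hxq]
  have hsub : ball (q:ℝ) (r:ℝ) ⊆ ball x ε := by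
    intro y hy
    rw [mem_ball, Real.dist_eq] at hy ⊢
    have h1 := abs_sub_lt_iff.1 hy
    have h2 := abs_sub_lt_iff.1 hxq
    rw [abs_sub_lt_iff]; constructor <;> linarith [h1.1, h1.2, h2.1, h2.2]
  have hq0 : μ (ball (q:ℝ) (r:ℝ)) = 0 := measure_mono_null hsub h0
  exact mem_iUnion.2 ⟨(q, r), mem_iUnion.2 ⟨hq0, hmem⟩⟩

theorem prod_exactDimensional
    (μ₁ μ₂ : Measure ℝ) [IsFiniteMeasure μ₁] [IsFiniteMeasure μ₂]
    (d₁ d₂ : ℝ) (h₁ : ExactDimensional μ₁ d₁) (h₂ : ExactDimensional μ₂ d₂) :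
    ExactDimensional (μ₁.prod μ₂) (d₁ + d₂) := by
  have hP := h₁.and (ae_ball_pos μ₁)
  have hQ := h₂.and (ae_ball_pos μ₂)
  set s : Set ℝ := {x | Tendsto (fun ε : ℝ => Real.log (μ₁ (ball x ε)).toReal / Real.log ε)
    (nhdsWithin 0 (Ioi 0)) (nhds d₁) ∧ ∀ ε : ℝ, 0 < ε → μ₁ (ball x ε) ≠ 0} with hs
  set t : Set ℝ := {y | Tendsto (fun ε : ℝ => Real.log (μ₂ (ball y ε)).toReal / Real.log ε)
    (nhdsWithin 0 (Ioi 0)) (nhds d₂) ∧ ∀ ε : ℝ, 0 < ε → μ₂ (ball y ε) ≠ 0} with ht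
  have hsnull : μ₁ sᶜ = 0 := hP
  have htnull : μ₂ tᶜ = 0 := hQ
  have hprod : μ₁.prod μ₂ (s ×ˢ t)ᶜ = 0 := by
    rw [Set.compl_prod_eq_union]
    refine measure_union_null ?_ ?_ <;> rw [Measure.prod_prod]
    · rw [hsnull, zero_mul]
    · rw [htnull, mul_zero]
  rw [ExactDimensional, ae_iff]
  refine measure_mono_null ?_ hprod
  intro p hp
  simp only [mem_setOf_eq, mem_compl_iff, Set.mem_prod, not_and_or] at hp ⊢
  by_contra hmem
  push_neg at hmem
  obtain ⟨⟨hT1, hpos1⟩, ⟨hT2, hpos2⟩⟩ := hmem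
  apply hp
  have hadd := hT1.add hT2
  refine hadd.congr' ?_
  filter_upwards [self_mem_nhdsWithin] with ε (hε : ε ∈ Ioi 0)
  have hε' : (0:ℝ) < ε := hε
  have hball : μ₁.prod μ₂ (ball p ε) = μ₁ (ball p.1 ε) * μ₂ (ball p.2 ε) := by
    rw [← ball_prod_same, Measure.prod_prod]
  have h1 : (μ₁ (ball p.1 ε)).toReal ≠ 0 :=
    ENNReal.toReal_ne_zero.2 ⟨hpos1 ε hε', measure_ne_top _ _⟩
  have h2 : (μ₂ (ball p.2 ε)).toReal ≠ 0 :=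
    ENNReal.toReal_ne_zero.2 ⟨hpos2 ε hε', measure_ne_top _ _⟩
  rw [hball, ENNReal.toReal_mul, Real.log_mul h1 h2, add_div]
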